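/- Let ψ : ℝ → ℝ be twice continuously differentiable, and let X, Y ∈ ℝ^{N×N} satisfy Xᵀ = X, X² = X, tr(X) = r and Yᵀ = Y, Y² = Y, tr(Y) = r (i.e. X, Y lie on the Grassmann manifold G_r(N)). For each pair 1 ≤ i < j ≤ N define f_{ij}(t,t') := ψ(‖exp(t·ℰ_{ij}) X exp(t·ℰ_{ij})ᵀ − exp(t'·ℰ_{ij}) Y exp(t'·ℰ_{ij})ᵀ‖²_F), where exp is the matrix exponential. Then the sum over all pairs (i,j) with 1 ≤ i < j ≤ N of the mixed partial derivative −∂²f_{ij}/∂t∂t' evaluated at (t,t') = (0,0) equals 2·ψ'(‖X−Y‖²_F)·(N·tr(XY) − r²) + 4·ψ''(‖X−Y‖²_F)·‖XY − YX‖²_F. -/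

import Mathlib

open Matrix BigOperators

/-- `ℰ_{ij} = (√2/2)(E_{ij} − E_{ji})` where `E_{ij}` is the matrix with a `1`
in entry `(i,j)` and `0` elsewhere. -/
noncomputable def calE (N : ℕ) (i j : Fin N) : Matrix (Fin N) (Fin N) ℝ :=
  (Real.sqrt 2 / 2) • (Matrix.single i j (1 : ℝ) - Matrix.single j i (1 : ℝ))

/-- The Frobenius inner product `⟨A,B⟩_F = tr(Aᵀ B)`. -/
noncomputable def frob {N r : ℕ} (A B : Matrix (Fin N) (Fin r) ℝ) : ℝ := (Aᵀ * B).trace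

/-- The squared Frobenius norm `‖A‖²_F = ⟨A,A⟩_F`. -/
noncomputable def frobSq {N r : ℕ} (A : Matrix (Fin N) (Fin r) ℝ) : ℝ := frob A A

/-! Write `A(t) = exp(tℰ) X exp(tℰ)ᵀ` and `B(t') = exp(t'ℰ) Y exp(t'ℰ)ᵀ`. For skew `ℰ` these curves
leave `X` and `Y` with velocities `[ℰ, X]` and `[ℰ, Y]`, so the chain rule gives
`-∂²f/∂t∂t' = 4 ψ'' ⟨X - Y, [ℰ, X]⟩ ⟨X - Y, [ℰ, Y]⟩ + 2 ψ' ⟨[ℰ, X], [ℰ, Y]⟩`, and for symmetric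
`X, Y` both factors of the first term equal `-tr(ℰ [X, Y])`. The summand is even in `ℰ` and
vanishes at `ℰ_ii = 0`, so the sum over `i < j` is half the sum over all `(i, j)`, which is
evaluated by `∑ ℰ_ij A ℰ_ij = Aᵀ - tr(A) • 1` and `∑ tr(ℰ_ij C)² = 2 ‖C‖²_F` for skew `C`. -/

lemma Finset.sum_sum_eq_two_nsmul_sum_sum_lt {ι M : Type*} [Fintype ι] [LinearOrder ι]
    [AddCommMonoid M] {g : ι → ι → M} (hsymm : ∀ i j, g i j = g j i) (hdiag : ∀ i, g i i = 0) :
    ∑ i, ∑ j, g i j = 2 • ∑ i, ∑ j, if i < j then g i j else 0 := by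
  have hsplit (i j : ι) :
      g i j = (if i < j then g i j else 0) + (if j < i then g j i else 0) := by
    rcases lt_trichotomy i j with h | rfl | h
    · simp [h, h.not_gt]
    · simp [hdiag]
    · simp [h, h.not_gt, hsymm i j]
  calc ∑ i, ∑ j, g i j
      = ∑ i, ∑ j, ((if i < j then g i j else 0) + (if j < i then g j i else 0)) :=
        Finset.sum_congr rfl fun i _ => Finset.sum_congr rfl fun j _ => hsplit i j
    _ = 2 • ∑ i, ∑ j, if i < j then g i j else 0 := by
        simp only [Finset.sum_add_distrib, two_nsmul]
        congr 1
        exact Finset.sum_comm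

-- Matrices carry no global norm. Any norm induces the product topology, which is all that
-- `HasDerivAt` sees, so a convenient one is chosen locally in each proof.
lemma HasDerivAt.matrix_transpose {𝕜 : Type*} [NontriviallyNormedField 𝕜] [CompleteSpace 𝕜]
    {m n : Type*} [Fintype m] [Fintype n] {A : 𝕜 → Matrix m n 𝕜} {A' : Matrix m n 𝕜} {t : 𝕜}
    (hA : HasDerivAt A A' t) : HasDerivAt (fun s => (A s)ᵀ) A'ᵀ t :=
  let := Matrix.normedAddCommGroup (m := m) (n := n) (α := 𝕜)
  let := Matrix.normedAddCommGroup (m := n) (n := m) (α := 𝕜)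
  let := Matrix.normedSpace (m := m) (n := n) (R := 𝕜) (α := 𝕜)
  let := Matrix.normedSpace (m := n) (n := m) (R := 𝕜) (α := 𝕜)
  (transposeLinearEquiv m n 𝕜 𝕜).toLinearMap.toContinuousLinearMap.hasFDerivAt.comp_hasDerivAt t hA

lemma HasDerivAt.matrix_trace {𝕜 : Type*} [NontriviallyNormedField 𝕜] [CompleteSpace 𝕜]
    {n : Type*} [Fintype n] {A : 𝕜 → Matrix n n 𝕜} {A' : Matrix n n 𝕜} {t : 𝕜}
    (hA : HasDerivAt A A' t) : HasDerivAt (fun s => (A s).trace) A'.trace t :=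
  let := Matrix.normedAddCommGroup (m := n) (n := n) (α := 𝕜)
  let := Matrix.normedSpace (m := n) (n := n) (R := 𝕜) (α := 𝕜)
  (traceLinearMap n 𝕜 𝕜).toContinuousLinearMap.hasFDerivAt.comp_hasDerivAt t hA

variable {N : ℕ}

lemma calE_swap (i j : Fin N) : calE N j i = -calE N i j := by
  rw [calE, calE, ← smul_neg, neg_sub]

lemma calE_self (i : Fin N) : calE N i i = 0 := by simp [calE]

lemma calE_transpose (i j : Fin N) : (calE N i j)ᵀ = -calE N i j := by
  rw [← calE_swap, calE, calE, transpose_smul, transpose_sub, transpose_single, transpose_single]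

lemma trace_calE_mul (i j : Fin N) (A : Matrix (Fin N) (Fin N) ℝ) :
    trace (calE N i j * A) = √2 / 2 * (A j i - A i j) := by
  simp [calE, sub_mul, trace_sub, trace_single_mul]

lemma calE_mul_mul_calE (i j : Fin N) (A : Matrix (Fin N) (Fin N) ℝ) :
    calE N i j * A * calE N i j = (1 / 2 : ℝ) •
      (single i j (A j i) + single j i (A i j) - single i i (A j j) - single j j (A i i)) := by
  have h2 : √2 ^ 2 = 2 := Real.sq_sqrt zero_le_two
  simp only [calE, Matrix.smul_mul, Matrix.mul_smul, sub_mul, mul_sub,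
    single_mul_mul_single, one_mul, mul_one]
  match_scalars <;> linarith [h2]

lemma sum_calE_mul_mul_calE (A : Matrix (Fin N) (Fin N) ℝ) :
    ∑ i, ∑ j, calE N i j * A * calE N i j = Aᵀ - A.trace • 1 := by
  ext a b
  simp only [calE_mul_mul_calE, Matrix.sum_apply, Matrix.smul_apply, Matrix.add_apply,
    Matrix.sub_apply, single_apply, smul_eq_mul, ← Finset.mul_sum, Finset.sum_add_distrib,
    Finset.sum_sub_distrib, ite_and, Finset.sum_ite_eq', Finset.mem_univ, if_true, trace,
    one_apply]
  split_ifs <;> simp_all [Finset.sum_ite_eq'] <;> ring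

lemma frob_comm {r : ℕ} (A B : Matrix (Fin N) (Fin r) ℝ) : frob A B = frob B A := by
  rw [frob, frob, ← trace_transpose, transpose_mul, transpose_transpose]

lemma frob_neg_neg {r : ℕ} (A B : Matrix (Fin N) (Fin r) ℝ) : frob (-A) (-B) = frob A B := by
  simp [frob]

lemma frob_eq_trace_mul {A : Matrix (Fin N) (Fin N) ℝ} (hA : Aᵀ = A)
    (B : Matrix (Fin N) (Fin N) ℝ) : frob A B = trace (A * B) := by
  rw [frob, hA]

lemma frobSq_eq_sum_sq {r : ℕ} (A : Matrix (Fin N) (Fin r) ℝ) :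
    frobSq A = ∑ i, ∑ j, A i j ^ 2 := by
  simp only [frobSq, frob, trace, diag, mul_apply, transpose_apply, sq]
  exact Finset.sum_comm

lemma neg_mul_sub_mul_neg (E A : Matrix (Fin N) (Fin N) ℝ) :
    -E * A - A * -E = -(E * A - A * E) := by
  noncomm_ring

lemma transpose_commutator_of_symm {X Y : Matrix (Fin N) (Fin N) ℝ} (hX : Xᵀ = X)
    (hY : Yᵀ = Y) : (X * Y - Y * X)ᵀ = -(X * Y - Y * X) := by
  rw [transpose_sub, transpose_mul, transpose_mul, hX, hY, neg_sub]

lemma transpose_commutator_of_skew_of_symm {E X : Matrix (Fin N) (Fin N) ℝ} (hE : Eᵀ = -E)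
    (hX : Xᵀ = X) : (E * X - X * E)ᵀ = E * X - X * E := by
  rw [transpose_sub, transpose_mul, transpose_mul, hX, hE, Matrix.mul_neg, Matrix.neg_mul,
    neg_sub_neg]

-- `E * 1 * E` rather than `E * E`, so that all four terms match `sum_calE_mul_mul_calE`.
lemma commutator_mul_commutator (E X Y : Matrix (Fin N) (Fin N) ℝ) :
    (E * X - X * E) * (E * Y - Y * E)
      = E * X * E * Y - E * (X * Y) * E - X * (E * 1 * E) * Y + X * (E * Y * E) := by
  noncomm_ring

lemma frob_sub_commutator_left {X Y : Matrix (Fin N) (Fin N) ℝ} (hX : Xᵀ = X) (hY : Yᵀ = Y)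
    (E : Matrix (Fin N) (Fin N) ℝ) :
    frob (X - Y) (E * X - X * E) = -trace (E * (X * Y - Y * X)) := by
  simp only [frob, transpose_sub, hX, hY, Matrix.mul_sub, Matrix.sub_mul, trace_sub,
    ← Matrix.mul_assoc]
  linear_combination trace_mul_cycle X E X - trace_mul_cycle Y E X - trace_mul_cycle X Y E
    + trace_mul_cycle Y X E

lemma frob_sub_commutator_right {X Y : Matrix (Fin N) (Fin N) ℝ} (hX : Xᵀ = X) (hY : Yᵀ = Y)
    (E : Matrix (Fin N) (Fin N) ℝ) :
    frob (X - Y) (E * Y - Y * E) = -trace (E * (X * Y - Y * X)) := by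
  simp only [frob, transpose_sub, hX, hY, Matrix.mul_sub, Matrix.sub_mul, trace_sub,
    ← Matrix.mul_assoc]
  linear_combination trace_mul_cycle X E Y + trace_mul_cycle Y X E - trace_mul_cycle Y E Y
    - trace_mul_cycle X Y E

lemma sum_trace_calE_mul_sq {C : Matrix (Fin N) (Fin N) ℝ} (hC : Cᵀ = -C) :
    ∑ i, ∑ j, trace (calE N i j * C) ^ 2 = 2 * frobSq C := by
  have h2 : √2 ^ 2 = 2 := Real.sq_sqrt zero_le_two
  simp only [trace_calE_mul, frobSq_eq_sum_sq, Finset.mul_sum]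
  refine Finset.sum_congr rfl fun i _ => Finset.sum_congr rfl fun j _ => ?_
  rw [← transpose_apply C, hC, neg_apply]
  linear_combination C i j ^ 2 * h2

lemma sum_frob_commutator_calE {X Y : Matrix (Fin N) (Fin N) ℝ} (hX : Xᵀ = X) (hY : Yᵀ = Y) :
    ∑ i, ∑ j, frob (calE N i j * X - X * calE N i j) (calE N i j * Y - Y * calE N i j)
      = 2 * (N * trace (X * Y) - trace X * trace Y) := by
  simp only [frob_eq_trace_mul (transpose_commutator_of_skew_of_symm (calE_transpose _ _) hX),
    commutator_mul_commutator, ← trace_sum, Finset.sum_add_distrib, Finset.sum_sub_distrib,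
    ← Finset.sum_mul, ← Finset.mul_sum, sum_calE_mul_mul_calE, transpose_mul, hX, hY]
  simp only [Matrix.sub_mul, Matrix.mul_sub, Algebra.smul_mul_assoc, Algebra.mul_smul_comm, one_mul,
    mul_one, transpose_one, trace_one, Fintype.card_fin, trace_add, trace_sub, trace_smul,
    smul_eq_mul, trace_mul_comm Y X]
  ring

lemma hasDerivAt_frob {A B : ℝ → Matrix (Fin N) (Fin N) ℝ} {A' B' : Matrix (Fin N) (Fin N) ℝ}
    {t : ℝ} (hA : HasDerivAt A A' t) (hB : HasDerivAt B B' t) :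
    HasDerivAt (fun s => frob (A s) (B s)) (frob A' (B t) + frob (A t) B') t := by
  let : NormedRing (Matrix (Fin N) (Fin N) ℝ) := Matrix.linftyOpNormedRing
  let : NormedAlgebra ℝ (Matrix (Fin N) (Fin N) ℝ) := Matrix.linftyOpNormedAlgebra
  have hmul := hA.matrix_transpose.mul hB
  exact hmul.matrix_trace.congr_deriv (trace_add _ _)

lemma hasDerivAt_frobSq {A : ℝ → Matrix (Fin N) (Fin N) ℝ} {A' : Matrix (Fin N) (Fin N) ℝ}
    {t : ℝ} (hA : HasDerivAt A A' t) :
    HasDerivAt (fun s => frobSq (A s)) (2 * frob (A t) A') t :=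
  (hasDerivAt_frob hA hA).congr_deriv (by rw [frob_comm A']; ring)

lemma hasDerivAt_exp_smul_mul_mul_transpose (E Z : Matrix (Fin N) (Fin N) ℝ) :
    HasDerivAt (fun s : ℝ => NormedSpace.exp (s • E) * Z * (NormedSpace.exp (s • E))ᵀ)
      (E * Z + Z * Eᵀ) 0 := by
  let : NormedRing (Matrix (Fin N) (Fin N) ℝ) := Matrix.linftyOpNormedRing
  let : NormedAlgebra ℝ (Matrix (Fin N) (Fin N) ℝ) := Matrix.linftyOpNormedAlgebra
  have hexp := hasDerivAt_exp_smul_const (𝕂 := ℝ) E 0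
  have h := (hexp.mul_const Z).mul hexp.matrix_transpose
  simp only [zero_smul, NormedSpace.exp_zero, transpose_one, one_mul, mul_one] at h
  exact h

lemma deriv_deriv_comp_frobSq_sub {ψ : ℝ → ℝ} {A B : ℝ → Matrix (Fin N) (Fin N) ℝ}
    {U V : Matrix (Fin N) (Fin N) ℝ} (hψ : Differentiable ℝ ψ)
    (hψ' : DifferentiableAt ℝ (deriv ψ) (frobSq (A 0 - B 0)))
    (hA : HasDerivAt A U 0) (hB : HasDerivAt B V 0) :
    deriv (fun t => deriv (fun t' => ψ (frobSq (A t - B t'))) 0) 0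
      = -(4 * deriv (deriv ψ) (frobSq (A 0 - B 0)) * frob (A 0 - B 0) U * frob (A 0 - B 0) V
          + 2 * deriv ψ (frobSq (A 0 - B 0)) * frob U V) := by
  let : NormedAddCommGroup (Matrix (Fin N) (Fin N) ℝ) := Matrix.normedAddCommGroup
  let : NormedSpace ℝ (Matrix (Fin N) (Fin N) ℝ) := Matrix.normedSpace
  have hinner (t : ℝ) : deriv (fun t' => ψ (frobSq (A t - B t'))) 0
      = deriv ψ (frobSq (A t - B 0)) * (2 * frob (A t - B 0) (-V)) :=
    ((hψ _).hasDerivAt.comp 0 (hasDerivAt_frobSq ((hB.const_sub (A t))))).deriv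
  have houter := (hψ'.hasDerivAt.comp 0 (hasDerivAt_frobSq (hA.sub_const (B 0)))).mul
    ((hasDerivAt_frob (hA.sub_const (B 0)) (hasDerivAt_const 0 (-V))).const_mul 2)
  simp only [hinner]
  refine houter.deriv.trans ?_
  simp only [frob, transpose_sub, mul_neg, trace_neg, Function.comp_apply, mul_zero, trace_zero,
    add_zero, neg_add_rev]
  ring

noncomputable def negMixedPartial (d₁ d₂ : ℝ) (X Y E : Matrix (Fin N) (Fin N) ℝ) : ℝ :=
  4 * d₂ * trace (E * (X * Y - Y * X)) ^ 2 + 2 * d₁ * frob (E * X - X * E) (E * Y - Y * E)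

lemma negMixedPartial_neg (d₁ d₂ : ℝ) (X Y E : Matrix (Fin N) (Fin N) ℝ) :
    negMixedPartial d₁ d₂ X Y (-E) = negMixedPartial d₁ d₂ X Y E := by
  simp only [negMixedPartial, neg_mul_sub_mul_neg, frob_neg_neg]
  rw [Matrix.neg_mul, trace_neg, neg_sq]

lemma negMixedPartial_zero (d₁ d₂ : ℝ) (X Y : Matrix (Fin N) (Fin N) ℝ) :
    negMixedPartial d₁ d₂ X Y 0 = 0 := by
  simp [negMixedPartial, frob]

lemma sum_negMixedPartial_calE (d₁ d₂ : ℝ) {X Y : Matrix (Fin N) (Fin N) ℝ} (hX : Xᵀ = X)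
    (hY : Yᵀ = Y) :
    ∑ i, ∑ j, negMixedPartial d₁ d₂ X Y (calE N i j)
      = 8 * d₂ * frobSq (X * Y - Y * X) + 4 * d₁ * (N * trace (X * Y) - trace X * trace Y) := by
  simp only [negMixedPartial, Finset.sum_add_distrib, ← Finset.mul_sum,
    sum_trace_calE_mul_sq (transpose_commutator_of_symm hX hY), sum_frob_commutator_calE hX hY]
  ring

lemma neg_deriv_deriv_comp_frobSq_conj_exp {ψ : ℝ → ℝ} (hψ : ContDiff ℝ 2 ψ)
    {E X Y : Matrix (Fin N) (Fin N) ℝ} (hE : Eᵀ = -E) (hX : Xᵀ = X) (hY : Yᵀ = Y) :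
    -deriv (fun t : ℝ => deriv (fun t' : ℝ => ψ (frobSq
        (NormedSpace.exp (t • E) * X * (NormedSpace.exp (t • E))ᵀ -
          NormedSpace.exp (t' • E) * Y * (NormedSpace.exp (t' • E))ᵀ))) 0) 0
      = negMixedPartial (deriv ψ (frobSq (X - Y))) (deriv (deriv ψ) (frobSq (X - Y))) X Y E := by
  have hconj (Z : Matrix (Fin N) (Fin N) ℝ) :
      HasDerivAt (fun s : ℝ => NormedSpace.exp (s • E) * Z * (NormedSpace.exp (s • E))ᵀ)
        (E * Z - Z * E) 0 := by
    simpa [hE, sub_eq_add_neg] using hasDerivAt_exp_smul_mul_mul_transpose E Z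
  rw [deriv_deriv_comp_frobSq_sub (hψ.differentiable (by norm_num))
    (hψ.differentiable_deriv_two _) (hconj X) (hconj Y)]
  simp only [zero_smul, NormedSpace.exp_zero, one_mul, mul_one, transpose_one,
    frob_sub_commutator_left hX hY, frob_sub_commutator_right hX hY, negMixedPartial]
  ring

theorem stmt_13_general (N r : ℕ) (ψ : ℝ → ℝ) (hψ : ContDiff ℝ 2 ψ)
    (X Y : Matrix (Fin N) (Fin N) ℝ)
    (hXs : Xᵀ = X) (hXr : X.trace = (r : ℝ))
    (hYs : Yᵀ = Y) (hYr : Y.trace = (r : ℝ))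
    (f : Fin N → Fin N → ℝ → ℝ → ℝ)
    (hf : ∀ i j t t', f i j t t' =
      ψ (frobSq (NormedSpace.exp (t • calE N i j) * X * (NormedSpace.exp (t • calE N i j))ᵀ -
                 NormedSpace.exp (t' • calE N i j) * Y * (NormedSpace.exp (t' • calE N i j))ᵀ))) :
    ∑ i : Fin N, ∑ j : Fin N,
      (if i < j then -(deriv (fun t => deriv (fun t' => f i j t t') 0) 0) else 0)
      = 2 * deriv ψ (frobSq (X - Y)) * ((N : ℝ) * (X * Y).trace - (r : ℝ) ^ 2)
        + 4 * deriv (deriv ψ) (frobSq (X - Y)) * frobSq (X * Y - Y * X) := by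
  set d₁ := deriv ψ (frobSq (X - Y))
  set d₂ := deriv (deriv ψ) (frobSq (X - Y))
  have hpair (i j : Fin N) : -deriv (fun t => deriv (fun t' => f i j t t') 0) 0
      = negMixedPartial d₁ d₂ X Y (calE N i j) := by
    simp only [hf]
    exact neg_deriv_deriv_comp_frobSq_conj_exp hψ (calE_transpose i j) hXs hYs
  have hhalf := Finset.sum_sum_eq_two_nsmul_sum_sum_lt
    (g := fun i j => negMixedPartial d₁ d₂ X Y (calE N i j))
    (fun i j => by rw [calE_swap i j, negMixedPartial_neg])
    (fun i => by rw [calE_self, negMixedPartial_zero])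
  rw [sum_negMixedPartial_calE d₁ d₂ hXs hYs, hXr, hYr, two_nsmul] at hhalf
  simp only [hpair]
  linarith

theorem stmt_13 (N r : ℕ) (ψ : ℝ → ℝ) (hψ : ContDiff ℝ 2 ψ)
    (X Y : Matrix (Fin N) (Fin N) ℝ)
    (hXs : Xᵀ = X) (hXp : X * X = X) (hXr : X.trace = (r : ℝ))
    (hYs : Yᵀ = Y) (hYp : Y * Y = Y) (hYr : Y.trace = (r : ℝ))
    (f : Fin N → Fin N → ℝ → ℝ → ℝ)
    (hf : ∀ i j t t', f i j t t' =
      ψ (frobSq (NormedSpace.exp (t • calE N i j) * X * (NormedSpace.exp (t • calE N i j))ᵀ -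
                 NormedSpace.exp (t' • calE N i j) * Y * (NormedSpace.exp (t' • calE N i j))ᵀ))) :
    ∑ i : Fin N, ∑ j : Fin N,
      (if i < j then -(deriv (fun t => deriv (fun t' => f i j t t') 0) 0) else 0)
      = 2 * deriv ψ (frobSq (X - Y)) * ((N : ℝ) * (X * Y).trace - (r : ℝ) ^ 2)
        + 4 * deriv (deriv ψ) (frobSq (X - Y)) * frobSq (X * Y - Y * X) :=
  stmt_13_general N r ψ hψ X Y hXs hXr hYs hYr f hf
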